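/- arXiv:1402.6799 — 2 statements merged into one kernel-verified Lean document; each statement's English description precedes it below -/
import Mathlib

section
/- Let ψ ∈ Hp(n) and let φ be a ψ-compatible family of heaps. Then: (a) if (ψ⋆φ)(i) = j with j ≥ 1, then dp_ψ(j) = φ_i(dp_ψ(i)); (b) dp_{ψ⋆φ}(i) = dp_{φ_i}(dp_ψ(i)) for all i ∈ {1,…,n}; (c) consequently, for any X ∈ [H^op, Set] and any family of morphisms h_i : [φ_i] → X (i ∈ {1,…,n}) such that h_j is the restriction of h_i whenever ψ(i) = j ≥ 1, the assignment (ψ⋆h)(i) = h_i(dp_ψ(i)) is a well-defined morphism of presheaves ψ⋆h : [ψ⋆φ] → X (i.e. ∂((ψ⋆h)(i)) = (ψ⋆h)((ψ⋆φ)(i)) whenever (ψ⋆φ)(i) ≥ 1). -/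
/-! ### Min-heaps and inc-lists: basic combinatorics -/

/-- Auxiliary fuelled computation of the depth of a node in a min-heap. -/
def dpAux (φ : ℕ → ℕ) : ℕ → ℕ → ℕ
  | 0, _ => 0
  | fuel + 1, i => if i = 0 then 0 else dpAux φ fuel (φ i) + 1

/-- The depth `dp φ i` of `i` in the min-heap `φ`: for a min-heap and `i ≥ 1`
this is the least `k ≥ 1` with `φ^[k] i = 0`. -/
def dp (φ : ℕ → ℕ) (i : ℕ) : ℕ := dpAux φ i i

/-- The order relation `i ≼_φ j` associated to a min-heap `φ`:
`i ≼_φ j` iff `i = φ^k(j)` for some `k ≥ 0`. -/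
def hle (φ : ℕ → ℕ) (i j : ℕ) : Prop := ∃ k, i = φ^[k] j

/-- `φ` is a min-heap of size `n`: `φ 0 = 0` and `φ i < i` for `i ∈ {1,…,n}`.
(The behaviour of `φ` outside `{0,…,n}` is irrelevant.) -/
def IsHeap (n : ℕ) (φ : ℕ → ℕ) : Prop :=
  φ 0 = 0 ∧ ∀ i, 1 ≤ i → i ≤ n → φ i < i

/-- A normalised min-heap of size `n`: additionally `φ i = 0` outside `{0,…,n}`,
so that normalised heaps correspond bijectively to functions `{0,…,n} → {0,…,n}`. -/
def IsHeapN (n : ℕ) (φ : ℕ → ℕ) : Prop :=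
  IsHeap n φ ∧ ∀ i, n < i → φ i = 0

/-- `α` is an inc-list of length `n`: `α 0 = 0` and `α` is strictly increasing
on `{0,…,n}`. -/
def IsInc (n : ℕ) (α : ℕ → ℕ) : Prop :=
  α 0 = 0 ∧ ∀ i j, i < j → j ≤ n → α i < α j

/-- A normalised inc-list of length `n`: additionally `α i = 0` outside `{0,…,n}`. -/
def IsIncN (n : ℕ) (α : ℕ → ℕ) : Prop :=
  IsInc n α ∧ ∀ i, n < i → α i = 0

/-- `φ` is a `ψ`-compatible family of heaps for `ψ ∈ Hp(n)`:
`φ i ∈ Hp(dp_ψ(i))` for each `i ∈ {1,…,n}`, and whenever `ψ i = j ≥ 1`,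
`φ j` is the restriction of `φ i` to `{0,…,dp_ψ(i) − 1}`. -/
def CompatFam (n : ℕ) (ψ : ℕ → ℕ) (φ : ℕ → ℕ → ℕ) : Prop :=
  (∀ i, 1 ≤ i → i ≤ n → IsHeap (dp ψ i) (φ i)) ∧
  (∀ i, 1 ≤ i → i ≤ n → 1 ≤ ψ i → ∀ j, j ≤ dp ψ i - 1 → φ (ψ i) j = φ i j)

/-- The heap `ψ⋆φ` obtained from `ψ ∈ Hp(n)` and a `ψ`-compatible family `φ`:
`(ψ⋆φ)(0) = 0` and `(ψ⋆φ)(i) = ψ^[dp_ψ(i) − φ_i(dp_ψ(i))](i)`. -/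
def star (ψ : ℕ → ℕ) (φ : ℕ → ℕ → ℕ) (i : ℕ) : ℕ :=
  if i = 0 then 0 else ψ^[dp ψ i - φ i (dp ψ i)] i

/-- `r` is a partial order on `{1,…,n}`, contained in the natural order,
in which every downset is linearly ordered. -/
def GoodOrder (n : ℕ) (r : ℕ → ℕ → Prop) : Prop :=
  (∀ i j, r i j → 1 ≤ i ∧ j ≤ n) ∧
  (∀ i, 1 ≤ i → i ≤ n → r i i) ∧
  (∀ i j k, r i j → r j k → r i k) ∧
  (∀ i j, r i j → r j i → i = j) ∧
  (∀ i j, r i j → i ≤ j) ∧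
  (∀ i j l, r i l → r j l → r i j ∨ r j i)

/-- The order relation on `{1,…,n}` associated to a min-heap of size `n`. -/
def heapRel (n : ℕ) (φ : ℕ → ℕ) (i j : ℕ) : Prop := 1 ≤ i ∧ j ≤ n ∧ hle φ i j

open Classical in
/-- The min-heap `α*φ` associated to an inc-list `α ∈ Inc(n)` and a heap
`φ ∈ Hp(α(n))`, given by the explicit formula
`(α*φ)(j) = max { i ∈ {0,…,j−1} : i = 0 or α(i) ≼_φ α(j) }`. -/
noncomputable def astar (α φ : ℕ → ℕ) (j : ℕ) : ℕ :=
  if j = 0 then 0 else Nat.findGreatest (fun i => 1 ≤ i ∧ hle φ (α i) (α j)) (j - 1)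

/-- The inc-list `α^φ_p` of Definition "projection-free": with
`{p_1 ≺ … ≺ p_m = p}` the `≼_{α*φ}`-downset of `p` (so `p_i = (α*φ)^[m−i](p)`),
`α^φ_p(i) = dp_φ(α(p_i))`. -/
noncomputable def aphiFam (α φ : ℕ → ℕ) (p i : ℕ) : ℕ :=
  if i = 0 then 0 else dp φ (α ((astar α φ)^[dp (astar α φ) p - i] p))

/-! ### Type-and-term structures: a concrete presentation of `[H^op, Set]`

A presheaf `X` on the free category `H` (objects `n`, `n_t` for `n ≥ 1`,
generating edges `n → n+1`, `n → n_t`) is presented as a graded pair of sets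
`(Ty, Tm)` with degree functions (with all degrees `≥ 1`) and with boundary
maps `bd : Ty → Ty` (lowering degree by one, and by convention fixing the
degree-one elements) and `bdt : Tm → Ty` (preserving degree).  This category
is equivalent to `[H^op, Set]`. -/
structure TT : Type 1 where
  Ty : Type
  Tm : Type
  degTy : Ty → ℕ
  degTm : Tm → ℕ
  bd : Ty → Ty
  bdt : Tm → Ty
  one_le_degTy : ∀ A, 1 ≤ degTy A
  one_le_degTm : ∀ a, 1 ≤ degTm a
  degTy_bd : ∀ A, 2 ≤ degTy A → degTy (bd A) + 1 = degTy A
  bd_fix : ∀ A, degTy A = 1 → bd A = A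
  degTy_bdt : ∀ a, degTy (bdt a) = degTm a

/-- Morphisms of type-and-term structures (presheaf morphisms). -/
structure TTHom (X Y : TT) where
  onTy : X.Ty → Y.Ty
  onTm : X.Tm → Y.Tm
  degTy_onTy : ∀ A, Y.degTy (onTy A) = X.degTy A
  degTm_onTm : ∀ a, Y.degTm (onTm a) = X.degTm a
  bd_onTy : ∀ A, Y.bd (onTy A) = onTy (X.bd A)
  bdt_onTm : ∀ a, Y.bdt (onTm a) = onTy (X.bdt a)

theorem TTHom.ext {X Y : TT} {f g : TTHom X Y}
    (h1 : f.onTy = g.onTy) (h2 : f.onTm = g.onTm) : f = g := by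
  cases f; cases g; cases h1; cases h2; rfl

/-- The identity morphism. -/
def TTHom.id (X : TT) : TTHom X X :=
  ⟨_root_.id, _root_.id, fun _ => rfl, fun _ => rfl, fun _ => rfl, fun _ => rfl⟩

/-- Composition (diagrammatic order). -/
def TTHom.comp {X Y Z : TT} (f : TTHom X Y) (g : TTHom Y Z) : TTHom X Z where
  onTy := fun A => g.onTy (f.onTy A)
  onTm := fun a => g.onTm (f.onTm a)
  degTy_onTy := fun A => (g.degTy_onTy _).trans (f.degTy_onTy A)
  degTm_onTm := fun a => (g.degTm_onTm _).trans (f.degTm_onTm a)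
  bd_onTy := fun A => by rw [g.bd_onTy, f.bd_onTy]
  bdt_onTm := fun a => by rw [g.bdt_onTm, f.bdt_onTm]

/-- `h` encodes a presheaf morphism `[φ] → X` out of the presheaf associated
to a min-heap `φ` of size `n`: `h i` is defined (`some`) exactly for
`i ∈ {1,…,n}`, has degree `dp_φ(i)`, and `∂(h i) = h (φ i)` when `φ i ≥ 1`. -/
def IsHeapLab (X : TT) (n : ℕ) (φ : ℕ → ℕ) (h : ℕ → Option X.Ty) : Prop :=
  (∀ i, 1 ≤ i → i ≤ n → ∃ A, h i = some A ∧ X.degTy A = dp φ i) ∧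
  (∀ i, ¬(1 ≤ i ∧ i ≤ n) → h i = none) ∧
  (∀ i, 1 ≤ i → i ≤ n → 1 ≤ φ i → (h i).map X.bd = h (φ i))

lemma dpAux_zero (φ : ℕ → ℕ) (fuel : ℕ) : dpAux φ fuel 0 = 0 := by
  cases fuel <;> simp [dpAux]

lemma dp_zero (φ : ℕ → ℕ) : dp φ 0 = 0 := rfl

lemma dpAux_succ {φ : ℕ → ℕ} {i : ℕ} (hi : i ≠ 0) (f : ℕ) :
    dpAux φ (f + 1) i = dpAux φ f (φ i) + 1 := by
  simp [dpAux, hi]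

lemma dp_eq {φ : ℕ → ℕ} {i : ℕ} (h1 : 1 ≤ i) :
    dp φ i = dpAux φ (i - 1) (φ i) + 1 := by
  have h := dpAux_succ (φ := φ) (i := i) (by omega) (i - 1)
  rw [Nat.sub_add_cancel h1] at h
  exact h

lemma dpAux_congr {m : ℕ} {f g : ℕ → ℕ}
    (hf : ∀ j, 1 ≤ j → j ≤ m → f j < j) (hfg : ∀ j, j ≤ m → f j = g j) :
    ∀ fuel i, i ≤ m → dpAux f fuel i = dpAux g fuel i := by
  intro fuel
  induction fuel with
  | zero => intro i _; rfl
  | succ fuel ih =>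
    intro i him
    by_cases hi : i = 0
    · subst hi; rw [dpAux_zero, dpAux_zero]
    · have hlt := hf i (by omega) him
      rw [dpAux_succ hi, dpAux_succ hi, ← hfg i him, ih (f i) (by omega)]

lemma dpAux_stable {n : ℕ} {ψ : ℕ → ℕ} (hψ : IsHeap n ψ) :
    ∀ i, i ≤ n → ∀ fuel, i ≤ fuel → dpAux ψ fuel i = dp ψ i := by
  intro i
  induction i using Nat.strong_induction_on with
  | _ i ih =>
    intro hin fuel hfuel
    by_cases hi : i = 0
    · subst hi; rw [dpAux_zero, dp_zero]
    · have h1 : 1 ≤ i := by omega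
      have hlt := hψ.2 i h1 hin
      obtain ⟨fuel', rfl⟩ : ∃ f', fuel = f' + 1 := ⟨fuel - 1, by omega⟩
      rw [dpAux_succ hi, dp_eq h1,
        ih (ψ i) hlt (by omega) fuel' (by omega),
        ih (ψ i) hlt (by omega) (i - 1) (by omega)]

lemma dp_succ {n : ℕ} {ψ : ℕ → ℕ} (hψ : IsHeap n ψ) {i : ℕ}
    (h1 : 1 ≤ i) (hin : i ≤ n) : dp ψ i = dp ψ (ψ i) + 1 := by
  have hlt := hψ.2 i h1 hin
  rw [dp_eq h1, dpAux_stable hψ (ψ i) (by omega) (i - 1) (by omega)]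

lemma one_le_dp {n : ℕ} {ψ : ℕ → ℕ} (hψ : IsHeap n ψ) {i : ℕ}
    (h1 : 1 ≤ i) (hin : i ≤ n) : 1 ≤ dp ψ i := by
  rw [dp_succ hψ h1 hin]; omega

lemma pos_of_dp {ψ : ℕ → ℕ} {i : ℕ} (h : 1 ≤ dp ψ i) : 1 ≤ i := by
  by_contra hc
  have : i = 0 := by omega
  subst this
  rw [dp_zero] at h; omega

lemma iter_le {n : ℕ} {ψ : ℕ → ℕ} (hψ : IsHeap n ψ) :
    ∀ k i, i ≤ n → ψ^[k] i ≤ i := by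
  intro k
  induction k with
  | zero => intro i _; simp
  | succ k ih =>
    intro i hin
    rw [Function.iterate_succ_apply]
    by_cases hi : i = 0
    · subst hi; rw [hψ.1]; exact ih 0 (by omega)
    · have hlt := hψ.2 i (by omega) hin
      exact le_trans (ih (ψ i) (by omega)) (by omega)

lemma iter_dp {n : ℕ} {ψ : ℕ → ℕ} (hψ : IsHeap n ψ) {i : ℕ}
    (h1 : 1 ≤ i) (hin : i ≤ n) :
    ∀ k, k ≤ dp ψ i → dp ψ (ψ^[k] i) = dp ψ i - k := by
  intro k
  induction k with
  | zero => simp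
  | succ k ih =>
    intro hk
    have hd := ih (by omega)
    have hjn : ψ^[k] i ≤ n := le_trans (iter_le hψ k i hin) hin
    have hj1 : 1 ≤ ψ^[k] i := pos_of_dp (i := ψ^[k] i) (ψ := ψ) (by omega)
    rw [Function.iterate_succ_apply']
    have := dp_succ hψ hj1 hjn
    omega

section Star

variable {n : ℕ} {ψ : ℕ → ℕ} {φ : ℕ → ℕ → ℕ}

lemma star_eq {i : ℕ} (h1 : 1 ≤ i) :
    star ψ φ i = ψ^[dp ψ i - φ i (dp ψ i)] i := by
  unfold _root_.star
  rw [if_neg (by omega : ¬ i = 0)]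

lemma phi_lt (hψ : IsHeap n ψ) (hφ : CompatFam n ψ φ) {i : ℕ}
    (h1 : 1 ≤ i) (hin : i ≤ n) : φ i (dp ψ i) < dp ψ i :=
  (hφ.1 i h1 hin).2 (dp ψ i) (one_le_dp hψ h1 hin) le_rfl

lemma star_heap (hψ : IsHeap n ψ) (hφ : CompatFam n ψ φ) :
    IsHeap n (star ψ φ) := by
  refine ⟨rfl, fun i h1 hin => ?_⟩
  have hm := phi_lt hψ hφ h1 hin
  rw [star_eq h1]
  obtain ⟨k, hk⟩ : ∃ k, dp ψ i - φ i (dp ψ i) = k + 1 :=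
    ⟨dp ψ i - φ i (dp ψ i) - 1, by omega⟩
  rw [hk, Function.iterate_succ_apply]
  have hlt := hψ.2 i h1 hin
  exact lt_of_le_of_lt (iter_le hψ k (ψ i) (by omega)) hlt

lemma dp_star (hψ : IsHeap n ψ) (hφ : CompatFam n ψ φ) {i : ℕ}
    (h1 : 1 ≤ i) (hin : i ≤ n) :
    dp ψ (star ψ φ i) = φ i (dp ψ i) := by
  have hm := phi_lt hψ hφ h1 hin
  rw [star_eq h1, iter_dp hψ h1 hin _ (by omega)]
  omega

lemma star_le_n (hψ : IsHeap n ψ) {i : ℕ} (h1 : 1 ≤ i) (hin : i ≤ n) :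
    star ψ φ i ≤ n := by
  rw [star_eq h1]
  exact le_trans (iter_le hψ _ i hin) hin

lemma iter_compat {β : Sort*} (hψ : IsHeap n ψ)
    (F : ℕ → ℕ → β) (P : ℕ → Prop)
    (hF : ∀ i, 1 ≤ i → i ≤ n → 1 ≤ ψ i → ∀ j, P j → j ≤ dp ψ i - 1 →
      F (ψ i) j = F i j) :
    ∀ i, 1 ≤ i → i ≤ n → ∀ k, k < dp ψ i → ∀ j, P j → j ≤ dp ψ i - k →
      F (ψ^[k] i) j = F i j := by
  intro i h1 hin k
  induction k with
  | zero => intro _ j _ _; rfl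
  | succ k ih =>
    intro hk j hP hj
    have hi'n : ψ^[k] i ≤ n := le_trans (iter_le hψ k i hin) hin
    have hdpi' : dp ψ (ψ^[k] i) = dp ψ i - k := iter_dp hψ h1 hin k (by omega)
    have h1i' : 1 ≤ ψ^[k] i := pos_of_dp (i := ψ^[k] i) (ψ := ψ) (by omega)
    have hdps : dp ψ (ψ^[k+1] i) = dp ψ i - (k+1) := iter_dp hψ h1 hin (k+1) (by omega)
    have h1ψi' : 1 ≤ ψ (ψ^[k] i) := by
      rw [Function.iterate_succ_apply'] at hdps
      exact pos_of_dp (i := ψ (ψ^[k] i)) (ψ := ψ) (by omega)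
    rw [Function.iterate_succ_apply',
      hF (ψ^[k] i) h1i' hi'n h1ψi' j hP (by omega),
      ih (by omega) j hP (by omega)]

lemma dp_star_eq (hψ : IsHeap n ψ) (hφ : CompatFam n ψ φ) :
    ∀ i, 1 ≤ i → i ≤ n → dp (star ψ φ) i = dp (φ i) (dp ψ i) := by
  intro i
  induction i using Nat.strong_induction_on with
  | _ i ih =>
    intro h1 hin
    have hst := star_heap hψ hφ
    have hd1 : 1 ≤ dp ψ i := one_le_dp hψ h1 hin
    have hm := phi_lt hψ hφ h1 hin
    have hdpj : dp ψ (star ψ φ i) = φ i (dp ψ i) := dp_star hψ hφ h1 hin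
    have hjn : star ψ φ i ≤ n := star_le_n hψ h1 hin
    have hphi : dp (φ i) (dp ψ i) = dp (φ i) (φ i (dp ψ i)) + 1 :=
      dp_succ (hφ.1 i h1 hin) hd1 le_rfl
    rw [dp_succ hst h1 hin, hphi]
    by_cases hm0 : φ i (dp ψ i) = 0
    · have hj0 : star ψ φ i = 0 := by
        by_contra hc
        have := one_le_dp hψ (i := star ψ φ i) (by omega) hjn
        omega
      rw [hj0, hm0, dp_zero, dp_zero]
    · have hj1 : 1 ≤ star ψ φ i := pos_of_dp (i := star ψ φ i) (ψ := ψ) (by omega)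
      have hjlt : star ψ φ i < i := hst.2 i h1 hin
      rw [ih (star ψ φ i) hjlt hj1 hjn, hdpj]
      congr 1
      have hagree : ∀ j', j' ≤ φ i (dp ψ i) → φ (star ψ φ i) j' = φ i j' := by
        intro j' hj'
        rw [star_eq h1]
        exact iter_compat hψ φ (fun _ => True)
          (fun a ha1 han hψa j _ hj => hφ.2 a ha1 han hψa j hj)
          i h1 hin _ (by omega) j' trivial (by omega)
      have hheapj : IsHeap (φ i (dp ψ i)) (φ (star ψ φ i)) := by
        have := hφ.1 (star ψ φ i) hj1 hjn
        rwa [hdpj] at this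
      exact dpAux_congr hheapj.2 hagree _ _ le_rfl

end Star

def IsHeapLab' (X : Type) (degTy : X → ℕ) (bd : X → X) (n : ℕ) (φ : ℕ → ℕ) (h : ℕ → Option X) : Prop :=
  (∀ i, 1 ≤ i → i ≤ n → ∃ A, h i = some A ∧ degTy A = dp φ i) ∧
  (∀ i, ¬(1 ≤ i ∧ i ≤ n) → h i = none) ∧
  (∀ i, 1 ≤ i → i ≤ n → 1 ≤ φ i → (h i).map bd = h (φ i))

theorem star_lab_main (n : ℕ) (ψ : ℕ → ℕ) (hψ : IsHeap n ψ)
    (φ : ℕ → ℕ → ℕ) (hφ : CompatFam n ψ φ)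
    (X : Type) (degTy : X → ℕ) (bd : X → X) (H : ℕ → ℕ → Option X)
    (hH : ∀ i, 1 ≤ i → i ≤ n → IsHeapLab' X degTy bd (dp ψ i) (φ i) (H i))
    (hc : ∀ i, 1 ≤ i → i ≤ n → 1 ≤ ψ i →
        ∀ j, 1 ≤ j → j ≤ dp ψ i - 1 → H (ψ i) j = H i j) :
    IsHeapLab' X degTy bd n (star ψ φ)
      (fun i => if 1 ≤ i ∧ i ≤ n then H i (dp ψ i) else none) := by
  refine ⟨fun i h1 hin => ?_, fun i hni => ?_, fun i h1 hin hs1 => ?_⟩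
  · simp only [if_pos (⟨h1, hin⟩ : 1 ≤ i ∧ i ≤ n)]
    obtain ⟨A, hA, hdeg⟩ := (hH i h1 hin).1 (dp ψ i) (one_le_dp hψ h1 hin) le_rfl
    exact ⟨A, hA, by rw [hdeg, ← dp_star_eq hψ hφ i h1 hin]⟩
  · simp only [if_neg hni]
  · have hjn : star ψ φ i ≤ n := star_le_n hψ h1 hin
    have hd1 : 1 ≤ dp ψ i := one_le_dp hψ h1 hin
    have hm := phi_lt hψ hφ h1 hin
    have hdpj : dp ψ (star ψ φ i) = φ i (dp ψ i) := dp_star hψ hφ h1 hin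
    have hm1 : 1 ≤ φ i (dp ψ i) := by
      have := one_le_dp hψ hs1 hjn
      omega
    have hmap : (H i (dp ψ i)).map bd = H i (φ i (dp ψ i)) :=
      (hH i h1 hin).2.2 (dp ψ i) hd1 le_rfl hm1
    have hHij : H (star ψ φ i) (φ i (dp ψ i)) = H i (φ i (dp ψ i)) := by
      rw [star_eq h1]
      exact iter_compat hψ H (fun j => 1 ≤ j) hc i h1 hin _ (by omega)
        (φ i (dp ψ i)) hm1 (by omega)
    simp only [if_pos (⟨h1, hin⟩ : 1 ≤ i ∧ i ≤ n),
      if_pos (⟨hs1, hjn⟩ : 1 ≤ star ψ φ i ∧ star ψ φ i ≤ n), hdpj]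
    rw [hmap, hHij]

/-- Let `ψ ∈ Hp(n)`, `φ` a `ψ`-compatible family of heaps.
Then (a) if `(ψ⋆φ)(i) = j ≥ 1` then `dp_ψ(j) = φ_i(dp_ψ(i))`;
(b) `dp_{ψ⋆φ}(i) = dp_{φ_i}(dp_ψ(i))` for `i ∈ {1,…,n}`;
(c) for any `X ∈ [H^op, Set]` and compatible family of morphisms
`H i : [φ_i] → X` (with `H (ψ i)` the restriction of `H i` when `ψ i ≥ 1`),
`(ψ⋆H)(i) = H_i(dp_ψ(i))` is a well-defined morphism `[ψ⋆φ] → X`. -/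
theorem star_lab_well_defined (n : ℕ) (ψ : ℕ → ℕ) (hψ : IsHeap n ψ)
    (φ : ℕ → ℕ → ℕ) (hφ : CompatFam n ψ φ) :
    (∀ i, 1 ≤ i → i ≤ n → 1 ≤ star ψ φ i →
      dp ψ (star ψ φ i) = φ i (dp ψ i)) ∧
    (∀ i, 1 ≤ i → i ≤ n → dp (star ψ φ) i = dp (φ i) (dp ψ i)) ∧
    (∀ (X : TT) (H : ℕ → ℕ → Option X.Ty),
      (∀ i, 1 ≤ i → i ≤ n → IsHeapLab X (dp ψ i) (φ i) (H i)) →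
      (∀ i, 1 ≤ i → i ≤ n → 1 ≤ ψ i →
        ∀ j, 1 ≤ j → j ≤ dp ψ i - 1 → H (ψ i) j = H i j) →
      IsHeapLab X n (star ψ φ)
        (fun i => if 1 ≤ i ∧ i ≤ n then H i (dp ψ i) else none)) :=
  ⟨fun i h1 hin _ => dp_star hψ hφ h1 hin, dp_star_eq hψ hφ,
   fun X H hH hc => star_lab_main n ψ hψ φ hφ X.Ty X.degTy X.bd H hH hc⟩
end

section
/- Let γ_n ∈ Hp(n) denote the min-heap with γ_n(i) = i − 1 for i ∈ {1,…,n}. Then: (a) any γ_n-compatible family of heaps φ satisfies γ_n⋆φ = φ_n (as functions {0,…,n} → {0,…,n}); (b) for any ψ ∈ Hp(n), the family given by φ_i = γ_{dp_ψ(i)} for each i is ψ-compatible and satisfies ψ⋆φ = ψ. -/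
private lemma dpAux_gamma : ∀ fuel i, i ≤ fuel → dpAux (fun i => i - 1) fuel i = i := by
  intro fuel
  induction fuel with
  | zero => intro i hi; simp [show i = 0 by omega, dpAux]
  | succ f ih =>
    intro i hi
    rcases Nat.eq_zero_or_pos i with h | h
    · simp [dpAux, h]
    · have hne : i ≠ 0 := by omega
      simp only [dpAux, hne, if_false]
      rw [ih (i - 1) (by omega)]; omega

private lemma dp_gamma (i : ℕ) : dp (fun i => i - 1) i = i :=
  dpAux_gamma i i le_rfl

private lemma iter_pred (k i : ℕ) : (fun i => i - 1)^[k] i = i - k := by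
  induction k with
  | zero => simp
  | succ m ih => rw [Function.iterate_succ_apply', ih]; omega

private lemma dp_pos (ψ : ℕ → ℕ) (i : ℕ) (hi : 1 ≤ i) : 1 ≤ dp ψ i := by
  obtain ⟨m, rfl⟩ : ∃ m, i = m + 1 := ⟨i - 1, by omega⟩
  simp [dp, dpAux]

private lemma gstar_def (ψ : ℕ → ℕ) (φ : ℕ → ℕ → ℕ) (i : ℕ) (h : i ≠ 0) :
    star ψ φ i = ψ^[dp ψ i - φ i (dp ψ i)] i := if_neg h

private lemma gstar_zero (ψ : ℕ → ℕ) (φ : ℕ → ℕ → ℕ) : star ψ φ 0 = 0 := rfl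

/-- (a) For any `γ_n`-compatible family `φ` (where
`γ_n(i) = i − 1`), `γ_n⋆φ = φ_n` on `{0,…,n}`.
(b) For any `ψ ∈ Hp(n)`, the family `i ↦ γ_{dp_ψ(i)}` is `ψ`-compatible and
`ψ⋆(γ_{dp_ψ(·)}) = ψ` on `{0,…,n}`. -/
theorem star_gamma_laws (n : ℕ) (hn : 1 ≤ n) :
    (∀ φ : ℕ → ℕ → ℕ, CompatFam n (fun i => i - 1) φ →
      ∀ i, i ≤ n → star (fun i => i - 1) φ i = φ n i) ∧
    (∀ ψ : ℕ → ℕ, IsHeap n ψ →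
      CompatFam n ψ (fun _ j => j - 1) ∧
      ∀ i, i ≤ n → star ψ (fun _ j => j - 1) i = ψ i) := by
  constructor
  · intro φ hφ i hi
    obtain ⟨hheap, hcompat⟩ := hφ
    have key : ∀ d i, 1 ≤ i → i + d ≤ n → ∀ j, j ≤ i → φ i j = φ (i + d) j := by
      intro d
      induction d with
      | zero => intro i _ _ j _; rfl
      | succ m ih =>
        intro i hi1 hin j hj
        have h1 : φ i j = φ (i + 1) j := by
          have := hcompat (i + 1) (by omega) (by omega)
            (by show 1 ≤ i + 1 - 1; omega) j
            (by rw [dp_gamma]; show j ≤ i + 1 - 1; omega)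
          simpa using this
        have h2 : φ (i + 1) j = φ (i + 1 + m) j := ih (i + 1) (by omega) (by omega) j (by omega)
        rw [h1, h2, show i + 1 + m = i + (m + 1) from by omega]
    rcases Nat.eq_zero_or_pos i with h0 | h1
    · subst h0
      rw [gstar_zero]
      exact ((hheap n hn le_rfl).1).symm
    · have hlt : φ i i < i := (hheap i h1 hi).2 i h1 (le_of_eq (dp_gamma i).symm)
      have hs : star (fun i => i - 1) φ i = φ i i := by
        rw [gstar_def _ _ _ (by omega), dp_gamma, iter_pred]
        omega
      rw [hs]
      have := key (n - i) i h1 (by omega) i le_rfl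
      rwa [show i + (n - i) = n by omega] at this
  · intro ψ hψ
    refine ⟨⟨?_, ?_⟩, ?_⟩
    · intro i _ _
      exact ⟨rfl, fun j hj _ => by show j - 1 < j; omega⟩
    · intro i _ _ _ j _; rfl
    · intro i hi
      rcases Nat.eq_zero_or_pos i with h0 | h1
      · subst h0
        rw [gstar_zero]
        exact hψ.1.symm
      · have hd : 1 ≤ dp ψ i := dp_pos ψ i h1
        rw [gstar_def _ _ _ (by omega)]
        have h2 : dp ψ i - (fun _ j => j - 1) i (dp ψ i) = 1 := by
          show dp ψ i - (dp ψ i - 1) = 1; omega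
        rw [h2, Function.iterate_one]
end
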